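/- For any snr₁ ≥ snr₂ > 0, P > 0, and α ∈ [0,1], lim_{W→∞} W·log(1 + α·snr₁·P/(2W)) = α·snr₁·P/2 and lim_{W→∞} W·log(1 + (1−α)·snr₂·P/(αsnr₁P + 2W)) = (1−α)·snr₂·P/2, and hence the limiting rate pairs (R₁,R₂) = (α·snr₁·P/2, (1−α)·snr₂·P/2) for α ∈ [0,1] trace exactly the set {(R₁,R₂) ∈ ℝ₊² : R₁/snr₁ + R₂/snr₂ ≤ P/2} as their lower-left closure (i.e., the set of pairs dominated coordinatewise by some such limit point equals this region). -/

import Mathlib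

open Filter Real Topology

/-! Both limits reduce to `t log(1 + c / t) → c` along the affine substitution `t = a x + b`.
For the region, dividing `Rᵢ` by `snrᵢ` turns it into `{u + v ≤ P / 2}`, and a point of it is
dominated by the limit pair with `α = 2 R₁ / (snr₁ P)`. -/

theorem tendsto_mul_log_one_add_div_affine_atTop (c b : ℝ) {a : ℝ} (ha : 0 < a) :
    Tendsto (fun x : ℝ => x * log (1 + c / (a * x + b))) atTop (𝓝 (c / a)) := by
  have h_affine : Tendsto (fun x : ℝ => a * x + b) atTop atTop :=
    tendsto_atTop_add_const_right _ b (tendsto_id.const_mul_atTop ha)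
  have h_main : Tendsto (fun x : ℝ => (a * x + b) * log (1 + c / (a * x + b))) atTop (𝓝 c) :=
    (tendsto_mul_log_one_add_div_atTop c).comp h_affine
  have h_log : Tendsto (fun x : ℝ => log (1 + c / (a * x + b))) atTop (𝓝 0) := by
    have h_one : Tendsto (fun x : ℝ => 1 + c / (a * x + b)) atTop (𝓝 1) := by
      simpa using (h_affine.const_div_atTop c).const_add 1
    simpa [Function.comp_def] using (continuousAt_log one_ne_zero).tendsto.comp h_one
  -- `x = ((a x + b) - b) / a`
  have h_comb := (h_main.sub (h_log.const_mul b)).div_const a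
  rw [mul_zero, sub_zero] at h_comb
  refine h_comb.congr fun x => ?_
  field_simp
  ring

theorem exists_le_mul_and_le_one_sub_mul_iff {u v Q : ℝ} (hu : 0 ≤ u) (hv : 0 ≤ v)
    (hQ : 0 < Q) :
    (∃ α ∈ Set.Icc (0 : ℝ) 1, u ≤ α * Q ∧ v ≤ (1 - α) * Q) ↔ u + v ≤ Q := by
  constructor
  · rintro ⟨α, -, huα, hvα⟩
    linarith
  · intro huv
    refine ⟨u / Q, ⟨by positivity, ?_⟩, ?_, ?_⟩
    · rw [div_le_one hQ]
      linarith
    · rw [div_mul_cancel₀ u hQ.ne']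
    · rw [sub_mul, one_mul, div_mul_cancel₀ u hQ.ne']
      linarith

theorem exists_le_mul_and_le_one_sub_mul_iff_div_add_div_le {x y s₁ s₂ P : ℝ} (hx : 0 ≤ x)
    (hy : 0 ≤ y) (hs₁ : 0 < s₁) (hs₂ : 0 < s₂) (hP : 0 < P) :
    (∃ α ∈ Set.Icc (0 : ℝ) 1, x ≤ α * s₁ * P / 2 ∧ y ≤ (1 - α) * s₂ * P / 2) ↔
      x / s₁ + y / s₂ ≤ P / 2 := by
  have h_scale : ∀ {z s : ℝ} (β : ℝ), 0 < s → (z ≤ β * s * P / 2 ↔ z / s ≤ β * (P / 2)) := by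
    intro z s β hs
    rw [div_le_iff₀ hs]
    ring_nf
  simp_rw [h_scale _ hs₁, h_scale _ hs₂]
  exact exists_le_mul_and_le_one_sub_mul_iff (by positivity) (by positivity) (by positivity)

theorem bc_superposition_infinite_bandwidth (snr₁ snr₂ P : ℝ)
    (hsnr : snr₁ ≥ snr₂) (hsnr₂ : 0 < snr₂) (hP : 0 < P) :
    (∀ α : ℝ, α ∈ Set.Icc (0:ℝ) 1 →
      Tendsto (fun W : ℝ => W * Real.log (1 + α * snr₁ * P / (2 * W)))
        atTop (nhds (α * snr₁ * P / 2)) ∧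
      Tendsto (fun W : ℝ =>
          W * Real.log (1 + (1 - α) * snr₂ * P / (α * snr₁ * P + 2 * W)))
        atTop (nhds ((1 - α) * snr₂ * P / 2))) ∧
    {p : ℝ × ℝ | 0 ≤ p.1 ∧ 0 ≤ p.2 ∧
        ∃ α ∈ Set.Icc (0:ℝ) 1,
          p.1 ≤ α * snr₁ * P / 2 ∧ p.2 ≤ (1 - α) * snr₂ * P / 2} =
      {p : ℝ × ℝ | 0 ≤ p.1 ∧ 0 ≤ p.2 ∧ p.1 / snr₁ + p.2 / snr₂ ≤ P / 2} := by
  have hsnr₁ : 0 < snr₁ := hsnr₂.trans_le hsnr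
  refine ⟨fun α _ => ⟨?_, ?_⟩, ?_⟩
  · simpa using tendsto_mul_log_one_add_div_affine_atTop (α * snr₁ * P) 0 two_pos
  · simpa [add_comm] using
      tendsto_mul_log_one_add_div_affine_atTop ((1 - α) * snr₂ * P) (α * snr₁ * P) two_pos
  · ext ⟨x, y⟩
    simp only [Set.mem_ofPred_eq]
    refine and_congr_right fun hx => and_congr_right fun hy => ?_
    exact exists_le_mul_and_le_one_sub_mul_iff_div_add_div_le hx hy hsnr₁ hsnr₂ hP
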